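/- Let Φ(x) = x̄/(ω_n ‖x‖ⁿ) be the Cauchy kernel on ℝⁿ\{0} with values in the Clifford algebra Cl_n (x̄ = -x for vectors, ω_n the surface area of the unit sphere). Then Φ is left monogenic: Σ_{j=1}^n e_j ∂_{x_j} Φ(x) = 0 for all x ≠ 0. -/

import Mathlib

/-- The quadratic form `Q(x) = -‖x‖²` on `ℝⁿ`, generating the Clifford algebra `Cl_n`. -/
noncomputable def Qneg (n : ℕ) : QuadraticForm ℝ (EuclideanSpace ℝ (Fin n)) :=
  -LinearMap.BilinMap.toQuadraticMap (innerₗ (EuclideanSpace ℝ (Fin n)) : LinearMap.BilinForm ℝ (EuclideanSpace ℝ (Fin n)))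

/-- `ω_n = 2π^{n/2}/Γ(n/2)`, the surface area of the unit sphere in `ℝⁿ`. -/
noncomputable def omegaN (n : ℕ) : ℝ :=
  2 * Real.pi ^ ((n : ℝ) / 2) / Real.Gamma ((n : ℝ) / 2)

/-- The `j`-th real component of the Cauchy kernel `Φ(x) = x̄/(ω_n ‖x‖ⁿ)`, with
`x̄ = -x`, so `Φ = Σ_j φ_j e_j` with `φ_j(x) = -x_j/(ω_n ‖x‖ⁿ)`. -/
noncomputable def cauchyKernelCoeff (n : ℕ) (j : Fin n)
    (x : EuclideanSpace ℝ (Fin n)) : ℝ :=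
  -(x j) / (omegaN n * ‖x‖ ^ n)

/-!
The partial derivatives `a i j = ∂_i φ_j(x) = (n x_i x_j - δ_ij ‖x‖²) / (ω_n ‖x‖ⁿ⁺²)` form a
symmetric matrix with trace `(n ‖x‖² - n ‖x‖²) / (ω_n ‖x‖ⁿ⁺²) = 0`. Since
`e_i e_j + e_j e_i = 2 Q(e_i) δ_ij` in the Clifford algebra, symmetrising `Σ a_ij e_i e_j` leaves
only `Σ a_ii Q(e_i) = -Σ a_ii = 0`.
-/

open QuadraticMap
open scoped InnerProductSpace

namespace CliffordAlgebra

variable {R M κ : Type*} [CommRing R] [AddCommGroup M] [Module R M] [Fintype κ]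
  {Q : QuadraticForm R M} {v : κ → M} {a : κ → κ → R}

theorem sum_smul_ι_mul_ι_add_self (ha : ∀ i j, a i j = a j i) :
    (∑ i, ∑ j, a i j • (ι Q (v i) * ι Q (v j))) + ∑ i, ∑ j, a i j • (ι Q (v i) * ι Q (v j)) =
      algebraMap R _ (∑ i, ∑ j, a i j * polar Q (v i) (v j)) := by
  conv_lhs => enter [2]; rw [Finset.sum_comm]
  simp only [← Finset.sum_add_distrib, map_sum]
  refine Finset.sum_congr rfl fun i _ ↦ Finset.sum_congr rfl fun j _ ↦ ?_
  rw [ha j i, ← smul_add, ι_mul_ι_add_swap, map_mul, Algebra.smul_def]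

theorem sum_smul_ι_mul_ι_of_pairwise_isOrtho [Invertible (2 : R)] (ha : ∀ i j, a i j = a j i)
    (hv : Pairwise fun i j ↦ Q.IsOrtho (v i) (v j)) :
    ∑ i, ∑ j, a i j • (ι Q (v i) * ι Q (v j)) = algebraMap R _ (∑ i, a i i * Q (v i)) := by
  have hpolar : ∑ i, ∑ j, a i j * polar Q (v i) (v j) = 2 * ∑ i, a i i * Q (v i) := by
    rw [Finset.mul_sum]
    refine Finset.sum_congr rfl fun i _ ↦ ?_
    rw [Finset.sum_eq_single i (fun j _ hji ↦ by rw [(hv hji.symm).polar_eq_zero, mul_zero])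
      (by simp), polar_self, nsmul_eq_mul]
    ring
  have h := sum_smul_ι_mul_ι_add_self (Q := Q) (v := v) ha
  rw [hpolar, ← two_smul R, map_mul, ← Algebra.smul_def] at h
  simpa using congrArg ((⅟2 : R) • ·) h

end CliffordAlgebra

theorem Qneg_apply {n : ℕ} (u : EuclideanSpace ℝ (Fin n)) : Qneg n u = -‖u‖ ^ 2 := by
  simp [Qneg]

theorem polar_Qneg {n : ℕ} (u w : EuclideanSpace ℝ (Fin n)) :
    polar (Qneg n) u w = -2 * ⟪u, w⟫_ℝ := by
  rw [Qneg, FunLike.coe_neg, polar_neg, LinearMap.BilinMap.polar_toQuadraticMap]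
  simp only [innerₗ_apply_apply, real_inner_comm, neg_add_rev, neg_mul]
  ring

theorem sq_rpow_neg_natCast_div_two {r : ℝ} (hr : 0 ≤ r) (m : ℕ) :
    (r ^ 2) ^ (-(m : ℝ) / 2) = (r ^ m)⁻¹ := by
  rw [← Real.rpow_natCast r 2, ← Real.rpow_mul hr, Nat.cast_ofNat,
    mul_div_cancel₀ _ two_ne_zero, Real.rpow_neg hr, Real.rpow_natCast]

section

variable {E : Type*} [NormedAddCommGroup E] [InnerProductSpace ℝ E]

theorem fderiv_div_norm_pow_apply (ℓ : E →L[ℝ] ℝ) (n : ℕ) {x : E} (hx : x ≠ 0) (w : E) :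
    fderiv ℝ (fun y ↦ ℓ y / ‖y‖ ^ n) x w =
      (‖x‖ ^ 2 * ℓ w - n * ℓ x * ⟪x, w⟫_ℝ) / ‖x‖ ^ (n + 2) := by
  -- `‖y‖⁻ⁿ = (‖y‖²)^(-n/2)`, and `‖·‖²` is smooth, so no derivative of the norm is needed.
  have hrpow : (fun y : E ↦ ℓ y / ‖y‖ ^ n) = fun y ↦ ℓ y * (‖y‖ ^ 2) ^ (-(n : ℝ) / 2) := by
    ext y
    rw [sq_rpow_neg_natCast_div_two (norm_nonneg y), div_eq_mul_inv]
  have hderiv : HasFDerivAt (fun y : E ↦ ℓ y * (‖y‖ ^ 2) ^ (-(n : ℝ) / 2)) _ x :=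
    ℓ.hasFDerivAt.mul ((hasStrictFDerivAt_norm_sq x).hasFDerivAt.rpow_const
      (p := -(n : ℝ) / 2) (Or.inl (by positivity)))
  rw [hrpow, hderiv.fderiv]
  have hexp : -(n : ℝ) / 2 - 1 = -((n + 2 : ℕ) : ℝ) / 2 := by push_cast; ring
  simp only [add_apply, smul_apply, smul_eq_mul, innerSL_apply_apply, hexp,
    sq_rpow_neg_natCast_div_two (norm_nonneg x)]
  have hx' : ‖x‖ ≠ 0 := norm_ne_zero_iff.mpr hx
  field_simp
  ring

end

theorem Qneg_single {n : ℕ} (i : Fin n) : Qneg n (EuclideanSpace.single i 1) = -1 := by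
  rw [Qneg_apply, PiLp.norm_single]
  norm_num

theorem pairwise_isOrtho_Qneg_single (n : ℕ) :
    Pairwise fun i j : Fin n ↦
      (Qneg n).IsOrtho (EuclideanSpace.single i 1) (EuclideanSpace.single j 1) := by
  intro i j hij
  rw [← isOrtho_polarBilin, polarBilin_apply_apply, polar_Qneg, EuclideanSpace.inner_single_left,
    PiLp.single_apply, if_neg hij, mul_zero, mul_zero]

theorem fderiv_cauchyKernelCoeff_single {n : ℕ} {x : EuclideanSpace ℝ (Fin n)} (hx : x ≠ 0)
    (i j : Fin n) :
    fderiv ℝ (cauchyKernelCoeff n j) x (EuclideanSpace.single i 1) =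
      (n * x i * x j - if i = j then ‖x‖ ^ 2 else 0) / (omegaN n * ‖x‖ ^ (n + 2)) := by
  have hcoeff : cauchyKernelCoeff n j = fun y ↦
      (-(omegaN n)⁻¹ • EuclideanSpace.proj j : EuclideanSpace ℝ (Fin n) →L[ℝ] ℝ) y / ‖y‖ ^ n := by
    ext y
    simp only [cauchyKernelCoeff, smul_apply, PiLp.proj_apply, smul_eq_mul]
    ring
  rw [hcoeff, fderiv_div_norm_pow_apply _ _ hx]
  simp only [smul_apply, PiLp.proj_apply, smul_eq_mul, EuclideanSpace.inner_single_right,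
    PiLp.single_apply, starRingEnd_apply, star_trivial, one_mul, eq_comm (a := j)]
  split_ifs <;> ring

theorem sum_fderiv_cauchyKernelCoeff_single_self {n : ℕ} {x : EuclideanSpace ℝ (Fin n)}
    (hx : x ≠ 0) :
    ∑ i, fderiv ℝ (cauchyKernelCoeff n i) x (EuclideanSpace.single i 1) = 0 := by
  simp only [fderiv_cauchyKernelCoeff_single hx, if_pos, ← Finset.sum_div]
  rw [Finset.sum_sub_distrib, Finset.sum_const, Finset.card_univ, Fintype.card_fin, nsmul_eq_mul,
    EuclideanSpace.real_norm_sq_eq]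
  simp only [mul_assoc, ← Finset.mul_sum, ← pow_two, sub_self, zero_div]

/-- The Cauchy kernel `Φ(x) = x̄/(ω_n‖x‖ⁿ)` is left monogenic on `ℝⁿ \ {0}`:
`D Φ = Σ_i e_i ∂_{x_i} Φ = Σ_i Σ_j (∂_{x_i} φ_j) e_i e_j = 0` for `x ≠ 0`. -/
theorem cauchyKernel_left_monogenic (n : ℕ) (x : EuclideanSpace ℝ (Fin n)) (hx : x ≠ 0) :
    ∑ i : Fin n, ∑ j : Fin n,
      (fderiv ℝ (cauchyKernelCoeff n j) x (EuclideanSpace.single i 1)) •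
        (CliffordAlgebra.ι (Qneg n) (EuclideanSpace.single i 1) *
          CliffordAlgebra.ι (Qneg n) (EuclideanSpace.single j 1)) = 0 := by
  have hsymm : ∀ i j : Fin n, fderiv ℝ (cauchyKernelCoeff n j) x (EuclideanSpace.single i 1) =
      fderiv ℝ (cauchyKernelCoeff n i) x (EuclideanSpace.single j 1) := fun i j ↦ by
    simp only [fderiv_cauchyKernelCoeff_single hx, eq_comm (a := j)]
    ring
  rw [CliffordAlgebra.sum_smul_ι_mul_ι_of_pairwise_isOrtho hsymm (pairwise_isOrtho_Qneg_single n)]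
  simp only [Qneg_single, mul_neg_one, Finset.sum_neg_distrib,
    sum_fderiv_cauchyKernelCoeff_single_self hx, neg_zero, map_zero]
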